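/- (Lower bound for the virtual value function.) Let α ≥ 0 and β ≥ 0. For every extractor E : 𝒳 → ℱ, the virtual value function satisfies 𝒱(E) = H(Y|E(X)) − α·H(Z|(E(X),π_E(X))) − β·H(V|(E(X),π_E(X))) ≥ H(Y|X) − α·H(Z|π_E(X)) − β·H(V|π_E(X)). -/

import Mathlib

open scoped BigOperators

/-- Marginal of a joint pmf on the first coordinate: `q_X(x) = ∑ w q(x,w)`. -/
noncomputable def margX {X W : Type*} [Fintype W] (q : X × W → ℝ) (x : X) : ℝ :=
  ∑ w, q (x, w)

open Classical in
/-- `Pr[f = a, W = w] = ∑_{x : f x = a} q(x,w)`. -/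
noncomputable def jointPr {X W A : Type*} [Fintype X] (q : X × W → ℝ)
    (f : X → A) (a : A) (w : W) : ℝ :=
  ∑ x ∈ Finset.univ.filter (fun x => f x = a), q (x, w)

open Classical in
/-- `Pr[f = a] = ∑_{x : f x = a} q_X(x)`. -/
noncomputable def featPr {X W A : Type*} [Fintype X] [Fintype W] (q : X × W → ℝ)
    (f : X → A) (a : A) : ℝ :=
  ∑ x ∈ Finset.univ.filter (fun x => f x = a), margX q x

open Classical in
/-- Conditional entropy `H(W | f(X))`, natural logarithm, with the convention that
summands with `Pr[f=a, W=w] = 0` contribute `0` (automatic since `-0 * log _ = 0`). -/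
noncomputable def condEnt {X W A : Type*} [Fintype X] [Fintype W] (q : X × W → ℝ)
    (f : X → A) : ℝ :=
  ∑ a ∈ Finset.univ.image f, ∑ w,
    -(jointPr q f a w) * Real.log (jointPr q f a w / featPr q f a)

/-- `-log t` valued in `(-∞, ∞]`, with the convention `-log 0 = +∞`. -/
noncomputable def negLog (t : ℝ) : EReal := if t = 0 then ⊤ else ((-(Real.log t) : ℝ) : EReal)

/-- Cross-entropy loss `∑_{x,w} q(x,w) · (-log P(Φ(x))(w))`, valued in `(-∞, ∞]`. -/
noncomputable def condLoss {X W G : Type*} [Fintype X] [Fintype W] (q : X × W → ℝ)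
    (Φ : X → G) (P : G → W → ℝ) : EReal :=
  ∑ x, ∑ w, (q (x, w) : EReal) * negLog (P (Φ x) w)

/-- A conditional probability mass function on labels `W` with feature space `G`. -/
def IsCondPMF {G W : Type*} [Fintype W] (P : G → W → ℝ) : Prop :=
  (∀ g w, 0 ≤ P g w) ∧ ∀ g, ∑ w, P g w = 1

open Classical in
/-- The posterior predictor: `Pr[Φ=g, W=w]/Pr[Φ=g]` on features of positive probability
in the image of `Φ`, and the uniform distribution on `W` otherwise. -/
noncomputable def posteriorPred {X W G : Type*} [Fintype X] [Fintype W] (q : X × W → ℝ)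
    (Φ : X → G) (g : G) (w : W) : ℝ :=
  if g ∈ Set.range Φ ∧ 0 < featPr q Φ g then jointPr q Φ g w / featPr q Φ g
  else 1 / Fintype.card W

/-- The posterior map `π(x)(w) = q(x,w)/q_X(x)`. -/
noncomputable def postMap {X W : Type*} [Fintype W] (q : X × W → ℝ) (x : X) : W → ℝ :=
  fun w => q (x, w) / margX q x

/-- Two-variable marginal `q_{XY}` of a pmf on `X × Y × Z × V`. -/
noncomputable def qXY {X Y Z V : Type*} [Fintype Z] [Fintype V]
    (q : X × Y × Z × V → ℝ) : X × Y → ℝ :=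
  fun p => ∑ z, ∑ v, q (p.1, p.2, z, v)

/-- Two-variable marginal `q_{XZ}` of a pmf on `X × Y × Z × V`. -/
noncomputable def qXZ {X Y Z V : Type*} [Fintype Y] [Fintype V]
    (q : X × Y × Z × V → ℝ) : X × Z → ℝ :=
  fun p => ∑ y, ∑ v, q (p.1, y, p.2, v)

/-- Two-variable marginal `q_{XV}` of a pmf on `X × Y × Z × V`. -/
noncomputable def qXV {X Y Z V : Type*} [Fintype Y] [Fintype Z]
    (q : X × Y × Z × V → ℝ) : X × V → ℝ :=
  fun p => ∑ y, ∑ z, q (p.1, y, z, p.2)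

/-- The posterior feature of an extractor `E`:
`π_E(x)(y) = Pr[E = E(x), Y = y] / Pr[E = E(x)]`. -/
noncomputable def postFeat {X Y F : Type*} [Fintype X] [Fintype Y] (qxy : X × Y → ℝ)
    (E : X → F) (x : X) : Y → ℝ :=
  fun y => jointPr qxy E (E x) y / featPr qxy E (E x)

/-- The virtual value function
`𝒱(E) = H(Y|E(X)) - α·H(Z|(E(X),π_E(X))) - β·H(V|(E(X),π_E(X)))`. -/
noncomputable def virtVal {X Y Z V F : Type*}
    [Fintype X] [Fintype Y] [Fintype Z] [Fintype V]
    (α β : ℝ) (q : X × Y × Z × V → ℝ) (E : X → F) : ℝ :=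
  condEnt (qXY q) E
    - α * condEnt (qXZ q) (fun x => (E x, postFeat (qXY q) E x))
    - β * condEnt (qXV q) (fun x => (E x, postFeat (qXY q) E x))

/-!
Conditioning on a function of a feature can only increase conditional entropy: this is the
log-sum inequality applied fibrewise. Since `X` refines `E(X)` and `(E(X), π_E(X))` refines
`π_E(X)`, each of the three entropies moves in the right direction, and `α, β ≥ 0`.
-/

open Finset Real

lemma sub_le_mul_log_div {x y : ℝ} (hx : 0 ≤ x) (hy : 0 < y) :
    x - y ≤ x * log (x / y) := by
  rcases hx.eq_or_lt with rfl | hx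
  · simpa using hy.le
  have h := one_sub_inv_le_log_of_pos (div_pos hx hy)
  rw [inv_div] at h
  calc x - y = x * (1 - y / x) := by field_simp
    _ ≤ x * log (x / y) := by gcongr

lemma mul_log_add_sub_le_mul_log_div {a b c : ℝ} (ha : 0 ≤ a) (hb : 0 ≤ b) (hc : 0 < c)
    (hab : b = 0 → a = 0) : a * log c + (a - c * b) ≤ a * log (a / b) := by
  rcases hb.eq_or_lt with rfl | hb
  · simp [hab rfl]
  rcases ha.eq_or_lt with rfl | ha
  · simpa using (mul_pos hc hb).le
  have h := sub_le_mul_log_div ha.le (mul_pos hc hb)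
  rw [div_mul_eq_div_div_swap, log_div (by positivity) hc.ne'] at h
  linarith

/-- The log-sum inequality. -/
lemma sum_mul_log_div_sum_le {ι : Type*} (s : Finset ι) (a b : ι → ℝ)
    (ha : ∀ i ∈ s, 0 ≤ a i) (hb : ∀ i ∈ s, 0 ≤ b i)
    (hab : ∀ i ∈ s, b i = 0 → a i = 0) :
    (∑ i ∈ s, a i) * log ((∑ i ∈ s, a i) / ∑ i ∈ s, b i)
      ≤ ∑ i ∈ s, a i * log (a i / b i) := by
  rcases (sum_nonneg ha).eq_or_lt with hA | hA
  · have ha0 := (sum_eq_zero_iff_of_nonneg ha).1 hA.symm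
    rw [← hA, zero_mul]
    exact sum_nonneg fun i hi => by rw [ha0 i hi, zero_mul]
  have hB : 0 < ∑ i ∈ s, b i := by
    refine (sum_nonneg hb).lt_of_ne fun hB => hA.ne' ?_
    exact sum_eq_zero fun i hi => hab i hi ((sum_eq_zero_iff_of_nonneg hb).1 hB.symm i hi)
  -- Gibbs: compare `a` with `c • b` for `c = (∑ a) / (∑ b)`, which has the same total mass.
  have hc := div_pos hA hB
  calc _ = ∑ i ∈ s, (a i * log ((∑ i ∈ s, a i) / ∑ i ∈ s, b i)
          + (a i - (∑ i ∈ s, a i) / (∑ i ∈ s, b i) * b i)) := by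
        rw [sum_add_distrib, sum_sub_distrib, ← sum_mul, ← mul_sum, div_mul_cancel₀ _ hB.ne']
        ring
    _ ≤ _ := sum_le_sum fun i hi =>
        mul_log_add_sub_le_mul_log_div (ha i hi) (hb i hi) hc (hab i hi)

section CondEnt

variable {X W A B : Type*} [Fintype X] (q : X × W → ℝ)

lemma jointPr_nonneg (hq : ∀ p, 0 ≤ q p) (f : X → A) (a : A) (w : W) :
    0 ≤ jointPr q f a w :=
  sum_nonneg fun _ _ => hq _

open Classical in
lemma jointPr_comp (f : X → A) (h : A → B) (b : B) (w : W) :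
    jointPr q (fun x => h (f x)) b w = ∑ a ∈ (univ.image f).filter (h · = b), jointPr q f a w := by
  unfold jointPr
  rw [eq_comm]
  convert sum_fiberwise_eq_sum_filter univ ((univ.image f).filter (h · = b)) f
    (fun x => q (x, w)) using 2
  simp

variable [Fintype W]

lemma featPr_eq_sum_jointPr (f : X → A) (a : A) : featPr q f a = ∑ w, jointPr q f a w := by
  unfold featPr margX jointPr
  rw [sum_comm]

lemma jointPr_le_featPr (hq : ∀ p, 0 ≤ q p) (f : X → A) (a : A) (w : W) :
    jointPr q f a w ≤ featPr q f a := by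
  rw [featPr_eq_sum_jointPr]
  exact single_le_sum (fun w _ => jointPr_nonneg q hq f a w) (mem_univ w)

open Classical in
lemma featPr_comp (f : X → A) (h : A → B) (b : B) :
    featPr q (fun x => h (f x)) b = ∑ a ∈ (univ.image f).filter (h · = b), featPr q f a := by
  simp only [featPr_eq_sum_jointPr, jointPr_comp]
  exact sum_comm

open Classical in
lemma condEnt_le_condEnt_comp (hq : ∀ p, 0 ≤ q p) (f : X → A) (h : A → B) :
    condEnt q f ≤ condEnt q (fun x => h (f x)) := by
  have hmaps : ∀ a ∈ univ.image f, h a ∈ univ.image (fun x => h (f x)) := by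
    simp only [mem_image, mem_univ, true_and]
    rintro _ ⟨x, rfl⟩
    exact ⟨x, rfl⟩
  unfold condEnt
  rw [← sum_fiberwise_of_maps_to hmaps]
  refine sum_le_sum fun b _ => ?_
  rw [sum_comm]
  refine sum_le_sum fun w _ => ?_
  simp only [jointPr_comp, featPr_comp, neg_mul, sum_neg_distrib, neg_le_neg_iff]
  exact sum_mul_log_div_sum_le _ _ _ (fun a _ => jointPr_nonneg q hq f a w)
    (fun a _ => (jointPr_nonneg q hq f a w).trans (jointPr_le_featPr q hq f a w))
    (fun a _ hz => le_antisymm (hz ▸ jointPr_le_featPr q hq f a w) (jointPr_nonneg q hq f a w))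

end CondEnt

lemma qXY_nonneg {X Y Z V : Type*} [Fintype Z] [Fintype V] {q : X × Y × Z × V → ℝ}
    (hq : ∀ p, 0 ≤ q p) (p : X × Y) : 0 ≤ qXY q p :=
  sum_nonneg fun _ _ => sum_nonneg fun _ _ => hq _

lemma qXZ_nonneg {X Y Z V : Type*} [Fintype Y] [Fintype V] {q : X × Y × Z × V → ℝ}
    (hq : ∀ p, 0 ≤ q p) (p : X × Z) : 0 ≤ qXZ q p :=
  sum_nonneg fun _ _ => sum_nonneg fun _ _ => hq _

lemma qXV_nonneg {X Y Z V : Type*} [Fintype Y] [Fintype Z] {q : X × Y × Z × V → ℝ}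
    (hq : ∀ p, 0 ≤ q p) (p : X × V) : 0 ≤ qXV q p :=
  sum_nonneg fun _ _ => sum_nonneg fun _ _ => hq _

theorem statement6_general {X Y Z V F : Type*}
    [Fintype X] [Fintype Y]
    [Fintype Z] [Fintype V]
    (α β : ℝ) (hα : 0 ≤ α) (hβ : 0 ≤ β)
    (q : X × Y × Z × V → ℝ) (hq0 : ∀ p, 0 ≤ q p) (E : X → F) :
    condEnt (qXY q) id
      - α * condEnt (qXZ q) (postFeat (qXY q) E)
      - β * condEnt (qXV q) (postFeat (qXY q) E)
    ≤ virtVal α β q E := by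
  unfold virtVal
  gcongr ?_ - _ * ?_ - _ * ?_
  · exact condEnt_le_condEnt_comp _ (qXY_nonneg hq0) id E
  · exact condEnt_le_condEnt_comp _ (qXZ_nonneg hq0) _ Prod.snd
  · exact condEnt_le_condEnt_comp _ (qXV_nonneg hq0) _ Prod.snd

/-- Lower bound for the virtual value function:
`𝒱(E) ≥ H(Y|X) - α·H(Z|π_E(X)) - β·H(V|π_E(X))` for every extractor `E`. -/
theorem statement6 {X Y Z V F : Type*}
    [Fintype X] [Nonempty X] [Fintype Y] [Nonempty Y]
    [Fintype Z] [Nonempty Z] [Fintype V] [Nonempty V]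
    (α β : ℝ) (hα : 0 ≤ α) (hβ : 0 ≤ β)
    (q : X × Y × Z × V → ℝ) (hq0 : ∀ p, 0 ≤ q p) (hq1 : ∑ p, q p = 1)
    (hqX : ∀ x, 0 < margX (qXY q) x) (E : X → F) :
    condEnt (qXY q) id
      - α * condEnt (qXZ q) (postFeat (qXY q) E)
      - β * condEnt (qXV q) (postFeat (qXY q) E)
    ≤ virtVal α β q E :=
  statement6_general α β hα hβ q hq0 E
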